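/- arXiv:math/0607348 — 2 statements merged into one kernel-verified Lean document; each statement's English description precedes it below -/
import Mathlib

section
/- Let A = kQ/⟨P⟩ be a gentle algebra over a field k, let α ≠ β be arrows with s(α) = s(β) and e(α) = e(β), and let γ be an arrow with s(γ) = e(α) such that γα ∈ P and γβ ∉ ⟨P⟩. If f ∈ Aut^l(A) satisfies f_γ(γ) ≠ 0, then f_β(α) = 0. -/
open scoped Classical

namespace GentlePaper

/-- A finite quiver. -/
structure Quiv where
  V : Type
  A : Type
  [fintV : Fintype V]
  [fintA : Fintype A]
  [decV : DecidableEq V]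
  [decA : DecidableEq A]
  src : A → V
  tgt : A → V

attribute [instance] Quiv.fintV Quiv.fintA Quiv.decV Quiv.decA

/-- A set of relations of length two: `P a b` means that the length-two path
"first `a`, then `b`" (i.e. the composition `b∘a`) belongs to `P`. -/
abbrev Rels (Q : Quiv) := Q.A → Q.A → Prop

/-- Connectedness of a quiver (as an undirected graph). -/
def Connected (Q : Quiv) : Prop :=
  Nonempty Q.V ∧ ∀ v w : Q.V, Relation.ReflTransGen
    (fun x y => ∃ a : Q.A, (Q.src a = x ∧ Q.tgt a = y) ∨ (Q.src a = y ∧ Q.tgt a = x)) v w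

/-- The number of cycles `c(Q) = #Q₁ - #Q₀ + 1` of a connected quiver. -/
def cQ (Q : Quiv) : ℕ := Fintype.card Q.A + 1 - Fintype.card Q.V

/-- The conditions for `kQ/⟨P⟩` to be a gentle algebra. -/
structure IsGentle (Q : Quiv) (P : Rels Q) : Prop where
  rel_comp : ∀ a b : Q.A, P a b → Q.tgt a = Q.src b
  src_le_two : ∀ v : Q.V, Fintype.card {a : Q.A // Q.src a = v} ≤ 2
  tgt_le_two : ∀ v : Q.V, Fintype.card {a : Q.A // Q.tgt a = v} ≤ 2
  nonrel_succ_unique : ∀ b c c' : Q.A, Q.src c = Q.tgt b → Q.src c' = Q.tgt b →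
    ¬ P b c → ¬ P b c' → c = c'
  nonrel_pred_unique : ∀ b a a' : Q.A, Q.tgt a = Q.src b → Q.tgt a' = Q.src b →
    ¬ P a b → ¬ P a' b → a = a'
  rel_succ_unique : ∀ b c c' : Q.A, P b c → P b c' → c = c'
  rel_pred_unique : ∀ b a a' : Q.A, P a b → P a' b → a = a'
  bounded : ∃ N : ℕ, ∀ l : List Q.A,
    List.Chain' (fun a b => Q.tgt a = Q.src b) l → l.length = N →
      ∃ (l₁ : List Q.A) (a b : Q.A) (l₂ : List Q.A), l = l₁ ++ a :: b :: l₂ ∧ P a b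

/-- Paths of a quiver: either a trivial path at a vertex, or a nonempty list of
composable arrows, recorded in traversal order. -/
def Pth (Q : Quiv) := Q.V ⊕ List Q.A

/-- Two arrows are composable (first `a` then `b`) and do not form a relation. -/
def permPair (Q : Quiv) (P : Rels Q) (a b : Q.A) : Prop := Q.tgt a = Q.src b ∧ ¬ P a b

/-- Two arrows are composable (first `a` then `b`) and form a relation. -/
def forbPair (Q : Quiv) (P : Rels Q) (a b : Q.A) : Prop := Q.tgt a = Q.src b ∧ P a b

/-- "Nonzero path" in `kQ/⟨P⟩`: a trivial path, or a nonempty composable sequence of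
arrows having no length-two subpath in `P`.  For nonempty lists this is exactly the
notion of a permitted path. -/
def pthOk (Q : Quiv) (P : Rels Q) : Pth Q → Prop
  | Sum.inl _ => True
  | Sum.inr l => l ≠ [] ∧ List.Chain' (permPair Q P) l

/-- Start vertex of a path/thread. -/
def thStart (Q : Quiv) : Pth Q → Option Q.V
  | Sum.inl v => some v
  | Sum.inr l => l.head?.map Q.src

/-- End vertex of a path/thread. -/
def thEnd (Q : Quiv) : Pth Q → Option Q.V
  | Sum.inl v => some v
  | Sum.inr l => l.getLast?.map Q.tgt

/-- Length of a path/thread. -/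
def thLen (Q : Quiv) : Pth Q → ℕ
  | Sum.inl _ => 0
  | Sum.inr l => l.length

/-- Permitted threads (trivial and non-trivial ones). -/
def IsPermThread (Q : Quiv) (P : Rels Q) : Pth Q → Prop
  | Sum.inl v => Fintype.card {a : Q.A // Q.src a = v} ≤ 1 ∧
      Fintype.card {a : Q.A // Q.tgt a = v} ≤ 1 ∧
      ∀ b c : Q.A, Q.tgt b = v → Q.src c = v → ¬ P b c
  | Sum.inr l => l ≠ [] ∧ List.Chain' (permPair Q P) l ∧
      (∀ b : Q.A, ¬ List.Chain' (permPair Q P) (l ++ [b])) ∧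
      (∀ b : Q.A, ¬ List.Chain' (permPair Q P) (b :: l))

/-- Forbidden threads (trivial and non-trivial ones). -/
def IsForbThread (Q : Quiv) (P : Rels Q) : Pth Q → Prop
  | Sum.inl v => Fintype.card {a : Q.A // Q.src a = v} ≤ 1 ∧
      Fintype.card {a : Q.A // Q.tgt a = v} ≤ 1 ∧
      ∀ b c : Q.A, Q.tgt b = v → Q.src c = v → P b c
  | Sum.inr l => l ≠ [] ∧ l.Nodup ∧ List.Chain' (forbPair Q P) l ∧
      (∀ b : Q.A, ¬ ((l ++ [b]).Nodup ∧ List.Chain' (forbPair Q P) (l ++ [b]))) ∧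
      (∀ b : Q.A, ¬ ((b :: l).Nodup ∧ List.Chain' (forbPair Q P) (b :: l)))

/-- The axioms for the sign functions `σ, ε : Q₁ → {1,-1}`. -/
structure SgnOk (Q : Quiv) (P : Rels Q) (sg ep : Q.A → ℤ) : Prop where
  sg_pm : ∀ a : Q.A, sg a = 1 ∨ sg a = -1
  ep_pm : ∀ a : Q.A, ep a = 1 ∨ ep a = -1
  sg_opp : ∀ a b : Q.A, a ≠ b → Q.src a = Q.src b → sg a = - sg b
  ep_opp : ∀ a b : Q.A, a ≠ b → Q.tgt a = Q.tgt b → ep a = - ep b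
  comp : ∀ a b : Q.A, Q.tgt a = Q.src b → ¬ P a b → sg b = - ep a

/-- `σ` extended to permitted threads. -/
noncomputable def permSg (Q : Quiv) (sg ep : Q.A → ℤ) : Pth Q → Option ℤ
  | Sum.inl v =>
      if h : ∃ γ : Q.A, Q.src γ = v then some (-(sg h.choose))
      else if h2 : ∃ β : Q.A, Q.tgt β = v then some (ep h2.choose)
      else none
  | Sum.inr l => l.head?.map sg

/-- `ε` extended to permitted threads. -/
noncomputable def permEp (Q : Quiv) (sg ep : Q.A → ℤ) : Pth Q → Option ℤ
  | Sum.inl v => (permSg Q sg ep (Sum.inl v)).map (fun x => -x)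
  | Sum.inr l => l.getLast?.map ep

/-- `σ` extended to forbidden threads. -/
noncomputable def forbSg (Q : Quiv) (sg ep : Q.A → ℤ) : Pth Q → Option ℤ
  | Sum.inl v =>
      if h : ∃ γ : Q.A, Q.src γ = v then some (-(sg h.choose))
      else if h2 : ∃ β : Q.A, Q.tgt β = v then some (-(ep h2.choose))
      else none
  | Sum.inr l => l.head?.map sg

/-- `ε` extended to forbidden threads. -/
noncomputable def forbEp (Q : Quiv) (sg ep : Q.A → ℤ) : Pth Q → Option ℤ
  | Sum.inl v => forbSg Q sg ep (Sum.inl v)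
  | Sum.inr l => l.getLast?.map ep

/-- One step of the algorithm computing `φ_A`: from the permitted thread `H` one
passes backwards through the forbidden thread `Π` (of length `len`) ending at the
end of `H` with `ε(Π) = -ε(H)`, arriving at the permitted thread `H'` starting at
the start of `Π` with `σ(H') = -σ(Π)`. -/
noncomputable def AlgStep (Q : Quiv) (P : Rels Q) (sg ep : Q.A → ℤ)
    (H H' : Pth Q) (len : ℕ) : Prop :=
  IsPermThread Q P H ∧ IsPermThread Q P H' ∧
  ∃ Pi : Pth Q, IsForbThread Q P Pi ∧
    thEnd Q Pi = thEnd Q H ∧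
    forbEp Q sg ep Pi = (permEp Q sg ep H).map (fun x => -x) ∧
    thStart Q H' = thStart Q Pi ∧
    permSg Q sg ep H' = (forbSg Q sg ep Pi).map (fun x => -x) ∧
    len = thLen Q Pi

/-- The permitted thread `H` returns to itself for the first time after exactly `n`
steps of the algorithm, and the total length of the forbidden threads used is `m`. -/
noncomputable def CycleData (Q : Quiv) (P : Rels Q) (sg ep : Q.A → ℤ)
    (H : Pth Q) (n m : ℕ) : Prop :=
  0 < n ∧ IsPermThread Q P H ∧
  ∃ (f : ℕ → Pth Q) (g : ℕ → ℕ),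
    f 0 = H ∧ f n = H ∧
    (∀ i, i < n → AlgStep Q P sg ep (f i) (f (i + 1)) (g i)) ∧
    (∀ i, 0 < i → i < n → f i ≠ H) ∧
    m = ∑ i ∈ Finset.range n, g i

/-- A directed cycle in which each pair of (cyclically) consecutive arrows is a
relation; recorded as a nonempty duplicate-free list of arrows. -/
def IsRelCycle (Q : Quiv) (P : Rels Q) (l : List Q.A) : Prop :=
  l ≠ [] ∧ l.Nodup ∧ List.Chain' (forbPair Q P) l ∧
  ∃ a b : Q.A, l.head? = some a ∧ l.getLast? = some b ∧ Q.tgt b = Q.src a ∧ P b a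

/-- The derived invariant `φ_A : ℕ² → ℕ` of a gentle algebra `A = kQ/⟨P⟩`.
For `n ≥ 1`, `φ_A(n,m)` counts the cycles of the algorithm which use `n` permitted
threads and forbidden threads of total length `m` (each such cycle consists of `n`
permitted threads, whence the division); `φ_A(0,m)` counts the directed cycles of
length `m` in which any two consecutive arrows form a relation (counted up to
rotation: such a cycle of length `m` has exactly `m` rotations). -/
noncomputable def phi (Q : Quiv) (P : Rels Q) (sg ep : Q.A → ℤ) : ℕ × ℕ → ℕ :=
  fun p => match p with
  | (0, m) => Nat.card {l : List Q.A // IsRelCycle Q P l ∧ l.length = m} / m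
  | (n + 1, m) => Nat.card {H : Pth Q // CycleData Q P sg ep H (n + 1) m} / (n + 1)

/-- The Kronecker quiver: two vertices and two parallel arrows. -/
def IsKronecker (Q : Quiv) : Prop :=
  ∃ (v w : Q.V) (a b : Q.A), v ≠ w ∧ a ≠ b ∧ (∀ u : Q.V, u = v ∨ u = w) ∧
    (∀ c : Q.A, c = a ∨ c = b) ∧ (∀ c : Q.A, Q.src c = v ∧ Q.tgt c = w)

end GentlePaper

namespace GentlePaper

/-- Composition of paths: `pcomp Q C D` is the path `C∘D` ("first `D`, then `C`"),
or `none` if the paths are not composable. -/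
def pcomp (Q : Quiv) : Pth Q → Pth Q → Option (Pth Q)
  | Sum.inl v, Sum.inl w => if v = w then some (Sum.inl v) else none
  | Sum.inl v, Sum.inr l => if thEnd Q (Sum.inr l) = some v then some (Sum.inr l) else none
  | Sum.inr l, Sum.inl v => if thStart Q (Sum.inr l) = some v then some (Sum.inr l) else none
  | Sum.inr l, Sum.inr l' => some (Sum.inr (l' ++ l))

/-- The index set `Γ` of the canonical basis of `kQ/⟨P⟩`: residue classes of the
paths of `Q` not lying in `⟨P⟩`. -/
def Gam (Q : Quiv) (P : Rels Q) := {p : Pth Q // pthOk Q P p}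

/-- The trivial path `1_v` as an element of `Γ`. -/
def trivGam (Q : Quiv) (P : Rels Q) (v : Q.V) : Gam Q P := ⟨Sum.inl v, trivial⟩

/-- An arrow `a` as an element of `Γ`. -/
def arrGam (Q : Quiv) (P : Rels Q) (a : Q.A) : Gam Q P :=
  ⟨Sum.inr [a], ⟨List.cons_ne_nil a [], List.isChain_singleton a⟩⟩

/-- The basis vector attached to a path, or `0` if the path lies in `⟨P⟩`. -/
noncomputable def basImg {k : Type} [Field k] {Q : Quiv} {P : Rels Q} {A : Type}
    [Ring A] [Algebra k A] (bas : Module.Basis (Gam Q P) k A) (p : Pth Q) : A :=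
  if h : pthOk Q P p then bas ⟨p, h⟩ else 0

/-- A presentation of the `k`-algebra `A` as the path algebra `kQ/⟨P⟩`: a `k`-basis
indexed by the residue classes of nonzero paths, multiplying as paths do, with the
identity being the sum of the trivial paths.  An algebra admitting such a
presentation is precisely one isomorphic to `kQ/⟨P⟩`. -/
structure PathAlgPresentation (k : Type) [Field k] (Q : Quiv) (P : Rels Q)
    (A : Type) [Ring A] [Algebra k A] where
  bas : Module.Basis (Gam Q P) k A
  mul_bas : ∀ C D : Gam Q P,
    bas C * bas D = (pcomp Q C.1 D.1).elim 0 (basImg bas)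
  one_bas : (1 : A) = ∑ v : Q.V, bas (trivGam Q P v)

namespace PathAlgPresentation

variable {k : Type} [Field k] {Q : Quiv} {P : Rels Q} {A : Type} [Ring A] [Algebra k A]

/-- The idempotent `1_v` of the presented algebra. -/
noncomputable def e (pp : PathAlgPresentation k Q P A) (v : Q.V) : A :=
  pp.bas (trivGam Q P v)

/-- The coefficient `f_C(D)` of the basis element `C` in the expansion of `f(D)`. -/
noncomputable def coeff (pp : PathAlgPresentation k Q P A)
    (f : A ≃ₐ[k] A) (C D : Gam Q P) : k :=
  pp.bas.repr (f (pp.bas D)) C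

/-- Membership in `Aut^l(A)`: algebra automorphisms fixing all the `1_v`. -/
def MemAutL (pp : PathAlgPresentation k Q P A) (f : A ≃ₐ[k] A) : Prop :=
  ∀ v : Q.V, f (pp.e v) = pp.e v

/-- Membership in `Aut₊^l(A) = {f ∈ Aut^l(A) | f_α(α) ≠ 0 for all arrows α}`. -/
noncomputable def MemAutStar (pp : PathAlgPresentation k Q P A) (f : A ≃ₐ[k] A) : Prop :=
  pp.MemAutL f ∧ ∀ a : Q.A, pp.coeff f (arrGam Q P a) (arrGam Q P a) ≠ 0

/-- Membership in `S(Q₁)`: automorphisms in `Aut₊^l(A)` rescaling every arrow. -/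
noncomputable def MemSQ1 (pp : PathAlgPresentation k Q P A) (f : A ≃ₐ[k] A) : Prop :=
  pp.MemAutStar f ∧ ∀ a : Q.A, ∃ c : kˣ,
    f (pp.bas (arrGam Q P a)) = (c : k) • pp.bas (arrGam Q P a)

/-- Membership in `N(A) = {f ∈ Aut₊^l(A) | f_α(α) = 1 for all arrows α}`. -/
noncomputable def MemNA (pp : PathAlgPresentation k Q P A) (f : A ≃ₐ[k] A) : Prop :=
  pp.MemAutStar f ∧ ∀ a : Q.A, pp.coeff f (arrGam Q P a) (arrGam Q P a) = 1

/-- Membership of an element in the subalgebra `⊕_{v ∈ Q₀} 1_v A 1_v`. -/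
noncomputable def IsDiag (pp : PathAlgPresentation k Q P A) (x : A) : Prop :=
  (∑ v : Q.V, pp.e v * x * pp.e v) = x

/-- Membership in `Inn^l(A)`: inner automorphisms `ι_x` with `x` an invertible
element of `⊕_v 1_v A 1_v`. -/
noncomputable def MemInnL (pp : PathAlgPresentation k Q P A) (f : A ≃ₐ[k] A) : Prop :=
  ∃ x : Aˣ, pp.IsDiag (x : A) ∧ ∀ a : A, f a = (↑x⁻¹ : A) * a * (x : A)

/-- Membership in `Inn_S^l(A)`: inner automorphisms `ι_s`, `s = Σ_v c_v 1_v`, `c_v ∈ k*`. -/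
noncomputable def MemInnS (pp : PathAlgPresentation k Q P A) (f : A ≃ₐ[k] A) : Prop :=
  ∃ (c : Q.V → kˣ) (x : Aˣ), ((x : A) = ∑ v : Q.V, (c v : k) • pp.e v) ∧
    ∀ a : A, f a = (↑x⁻¹ : A) * a * (x : A)

/-- Membership in `Inn_N^l(A)`: inner automorphisms `ι_u`, `u = Σ_v (1_v + n_v)`,
with `n_v ∈ 1_v A 1_v` nilpotent. -/
noncomputable def MemInnN (pp : PathAlgPresentation k Q P A) (f : A ≃ₐ[k] A) : Prop :=
  ∃ (x : Aˣ) (n : Q.V → A), (∀ v : Q.V, IsNilpotent (n v)) ∧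
    (∀ v : Q.V, pp.e v * n v * pp.e v = n v) ∧
    ((x : A) = ∑ v : Q.V, (pp.e v + n v)) ∧
    ∀ a : A, f a = (↑x⁻¹ : A) * a * (x : A)

end PathAlgPresentation

end GentlePaper


namespace GentlePaper

open PathAlgPresentation


/-!
Every arrow `a` of a gentle algebra satisfies `a² = 0` (for a loop this is the finiteness
condition), hence so does `f(a)`. Taking the coefficient of a trivial path `1_w` is
multiplicative, so `f(a)` has no component on trivial paths. Expanding
`0 = f(γα) = f(γ) f(α)` in the basis `Γ`, the coefficient of `γβ` is therefore `f_γ(γ) f_β(α)`,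
since `γ ∘ β` is the only factorisation of `γβ` into two non-trivial paths.
-/

section Quiver

variable {Q : Quiv} {P : Rels Q}

theorem not_permPair_self (hg : IsGentle Q P) (a : Q.A) : ¬ permPair Q P a a := by
  rintro ⟨hloop, hnP⟩
  obtain ⟨N, hN⟩ := hg.bounded
  obtain ⟨l₁, a', b', l₂, hl, hP⟩ := hN (List.replicate N a)
    (List.isChain_replicate_of_rel N hloop) List.length_replicate
  obtain rfl : a' = a := List.eq_of_mem_replicate (n := N) (by simp [hl])
  obtain rfl : b' = a' := List.eq_of_mem_replicate (n := N) (by simp [hl])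
  exact hnP hP

@[simp] theorem trivGam_val (v : Q.V) : (trivGam Q P v).1 = Sum.inl v := rfl

@[simp] theorem arrGam_val (a : Q.A) : (arrGam Q P a).1 = Sum.inr [a] := rfl

theorem Gam.ext_iff {C D : Gam Q P} : C = D ↔ C.1 = D.1 := Subtype.ext_iff

def pairGam {b c : Q.A} (h : permPair Q P b c) : Gam Q P :=
  ⟨Sum.inr [b, c], List.cons_ne_nil _ _, List.isChain_pair.mpr h⟩

@[simp] theorem pairGam_val {b c : Q.A} (h : permPair Q P b c) :
    (pairGam h).1 = Sum.inr [b, c] := rfl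

end Quiver

namespace PathAlgPresentation

variable {k : Type} [Field k] {Q : Quiv} {P : Rels Q} {A : Type} [Ring A] [Algebra k A]
  (pp : PathAlgPresentation k Q P A)

theorem repr_basImg (p : Pth Q) (E : Gam Q P) :
    pp.bas.repr (basImg pp.bas p) E = if p = E.1 then 1 else 0 := by
  unfold basImg
  split_ifs with hp hpE hpE
  · subst hpE
    exact pp.bas.repr_self_apply E E |>.trans (if_pos rfl)
  · exact pp.bas.repr_self_apply (⟨p, hp⟩ : Gam Q P) E |>.trans
      (if_neg fun h => hpE (congrArg Subtype.val h))
  · exact absurd (hpE ▸ E.2) hp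
  · simp

theorem repr_bas_mul_bas (C D E : Gam Q P) :
    pp.bas.repr (pp.bas C * pp.bas D) E = if pcomp Q C.1 D.1 = some E.1 then 1 else 0 := by
  rw [pp.mul_bas]
  rcases pcomp Q C.1 D.1 with _ | p
  · simp
  · simp [repr_basImg]

theorem repr_mul_eq_of_forall_bas (E : Gam Q P) (B : A →ₗ[k] A →ₗ[k] k)
    (hB : ∀ C D, pp.bas.repr (pp.bas C * pp.bas D) E = B (pp.bas C) (pp.bas D)) (x y : A) :
    pp.bas.repr (x * y) E = B x y :=
  LinearMap.congr_fun₂ (LinearMap.ext_basis pp.bas pp.bas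
    (B := (LinearMap.mul k A).compr₂ (pp.bas.coord E)) hB) x y

theorem repr_mul_trivGam (w : Q.V) (x y : A) :
    pp.bas.repr (x * y) (trivGam Q P w) =
      pp.bas.repr x (trivGam Q P w) * pp.bas.repr y (trivGam Q P w) := by
  refine pp.repr_mul_eq_of_forall_bas _
    ((LinearMap.mul k k).compl₁₂ (pp.bas.coord _) (pp.bas.coord _)) (fun C D => ?_) x y
  simp only [repr_bas_mul_bas, LinearMap.compl₁₂_apply, LinearMap.mul_apply',
    Module.Basis.coord_apply, Module.Basis.repr_self_apply, Gam.ext_iff, trivGam_val]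
  rcases C.1 with _ | _ <;> rcases D.1 with _ | _ <;> simp only [pcomp] <;> split_ifs <;>
    simp_all [Pth]

theorem repr_mul_pairGam {b c : Q.A} (h : permPair Q P b c) (x y : A) :
    pp.bas.repr (x * y) (pairGam h) =
      pp.bas.repr x (arrGam Q P c) * pp.bas.repr y (arrGam Q P b) +
      pp.bas.repr x (trivGam Q P (Q.tgt c)) * pp.bas.repr y (pairGam h) +
      pp.bas.repr x (pairGam h) * pp.bas.repr y (trivGam Q P (Q.src b)) := by
  refine pp.repr_mul_eq_of_forall_bas _
    ((LinearMap.mul k k).compl₁₂ (pp.bas.coord _) (pp.bas.coord _) +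
      (LinearMap.mul k k).compl₁₂ (pp.bas.coord _) (pp.bas.coord _) +
      (LinearMap.mul k k).compl₁₂ (pp.bas.coord _) (pp.bas.coord _)) (fun C D => ?_) x y
  simp only [repr_bas_mul_bas, LinearMap.add_apply, LinearMap.compl₁₂_apply, LinearMap.mul_apply',
    Module.Basis.coord_apply, Module.Basis.repr_self_apply, Gam.ext_iff, trivGam_val, arrGam_val,
    pairGam_val]
  obtain ⟨_ | l, hC⟩ := C <;> obtain ⟨_ | l', hD⟩ := D
  case inr.inr =>
    have hl : l ≠ [] := hC.1
    have hl' : l' ≠ [] := hD.1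
    simp [Pth, pcomp, List.append_eq_cons_iff, List.singleton_eq_append_iff, hl, hl', ite_and]
  all_goals simp only [pcomp]; split_ifs <;> simp_all [Pth, thEnd, thStart]

theorem repr_trivGam_eq_zero_of_mul_self_eq_zero {x : A} (hx : x * x = 0) (w : Q.V) :
    pp.bas.repr x (trivGam Q P w) = 0 :=
  mul_self_eq_zero.mp <| by rw [← repr_mul_trivGam, hx, map_zero, Finsupp.zero_apply]

theorem bas_arrGam_mul_eq_zero {b c : Q.A} (h : ¬ permPair Q P b c) :
    pp.bas (arrGam Q P c) * pp.bas (arrGam Q P b) = 0 := by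
  rw [pp.mul_bas]
  exact dif_neg fun hok => h (List.isChain_pair.mp hok.2)

end PathAlgPresentation

theorem coeff_parallel_eq_zero_general
    (k : Type) [Field k] (Q : Quiv) (P : Rels Q)
    (A : Type) [Ring A] [Algebra k A]
    (pp : PathAlgPresentation k Q P A) (hg : IsGentle Q P)
    (α β γ : Q.A)
    (ht : Q.tgt α = Q.tgt β)
    (hγ : Q.src γ = Q.tgt α)
    (hrel : P α γ) (hnrel : ¬ P β γ)
    (f : A ≃ₐ[k] A)
    (hfγ : pp.coeff f (arrGam Q P γ) (arrGam Q P γ) ≠ 0) :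
    pp.coeff f (arrGam Q P β) (arrGam Q P α) = 0 := by
  have hβγ : permPair Q P β γ := ⟨ht ▸ hγ.symm, hnrel⟩
  have hsq (a : Q.A) : f (pp.bas (arrGam Q P a)) * f (pp.bas (arrGam Q P a)) = 0 := by
    rw [← map_mul, pp.bas_arrGam_mul_eq_zero (not_permPair_self hg a), map_zero]
  have hγα : f (pp.bas (arrGam Q P γ)) * f (pp.bas (arrGam Q P α)) = 0 := by
    rw [← map_mul, pp.bas_arrGam_mul_eq_zero fun h => h.2 hrel, map_zero]
  have key := pp.repr_mul_pairGam hβγ (f (pp.bas (arrGam Q P γ))) (f (pp.bas (arrGam Q P α)))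
  simp only [hγα, map_zero, Finsupp.zero_apply,
    pp.repr_trivGam_eq_zero_of_mul_self_eq_zero (hsq _), zero_mul, mul_zero, add_zero] at key
  exact (mul_eq_zero.mp key.symm).resolve_left hfγ

/-- For a gentle algebra `A = kQ/⟨P⟩`, parallel arrows `α ≠ β` and an arrow `γ`
with `s(γ) = e(α)`, `γα ∈ P`, `γβ ∉ ⟨P⟩`: any `f ∈ Aut^l(A)` with `f_γ(γ) ≠ 0`
satisfies `f_β(α) = 0`. -/
theorem coeff_parallel_eq_zero
    (k : Type) [Field k] (Q : Quiv) (P : Rels Q)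
    (A : Type) [Ring A] [Algebra k A]
    (pp : PathAlgPresentation k Q P A) (hg : IsGentle Q P)
    (α β γ : Q.A) (hne : α ≠ β)
    (hs : Q.src α = Q.src β) (ht : Q.tgt α = Q.tgt β)
    (hγ : Q.src γ = Q.tgt α)
    (hrel : P α γ) (hnrel : ¬ P β γ)
    (f : A ≃ₐ[k] A) (hf : pp.MemAutL f)
    (hfγ : pp.coeff f (arrGam Q P γ) (arrGam Q P γ) ≠ 0) :
    pp.coeff f (arrGam Q P β) (arrGam Q P α) = 0 :=
  coeff_parallel_eq_zero_general k Q P A pp hg α β γ ht hγ hrel hnrel f hfγ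

end GentlePaper
end

section
/- Let A = kQ/⟨P⟩ be a gentle algebra over a field k with Q connected. Then the group Inn_S^l(A) is isomorphic to the direct product (k*)^{#Q0 − 1}; moreover Inn_S^l(A) is a subgroup of S(Q1) and the quotient group S(Q1)/Inn_S^l(A) is isomorphic to (k*)^{#Q1 − #Q0 + 1} = (k*)^{c(Q)}. -/
open scoped Classical

/-! The automorphisms in `S(Q₁)` are exactly the rescalings `α ↦ w(α) α` with
`w : Q₁ → k*`, and `w ↦ (rescaling by w)` identifies `S(Q₁)` with `(k*)^{Q₁}`. Conjugation by
`Σ c_v 1_v` multiplies an arrow `α` by `c(s α) / c(e α)`, so `Inn_S^l(A)` is the image of the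
coboundary map `d : (k*)^{Q₀} → (k*)^{Q₁}`. For `Q` connected, `ker d` consists of the constants,
whence `im d ≅ (k*)^{#Q₀ - 1}`; and after fixing a spanning tree every `w` is cohomologous to a
unique function that is trivial on the tree arrows, whence `coker d ≅ (k*)^{#Q₁ - #Q₀ + 1}`. -/

namespace GentlePaper

section Coboundary

variable (Q : Quiv) (G : Type*) [CommGroup G]

def coboundary : (Q.V → G) →* (Q.A → G) where
  toFun c a := c (Q.src a) / c (Q.tgt a)
  map_one' := by ext; simp
  map_mul' c c' := by ext; exact mul_div_mul_comm _ _ _ _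

@[simp] lemma coboundary_apply (c : Q.V → G) (a : Q.A) :
    coboundary Q G c a = c (Q.src a) / c (Q.tgt a) := rfl

end Coboundary

/-- A rooted spanning tree: `parent v` is the tree arrow, of either orientation, joining `v` to
a vertex nearer the root. -/
structure SpanningTree (Q : Quiv) where
  root : Q.V
  parent : {v : Q.V // v ≠ root} → Q.A
  height : Q.V → ℕ
  parent_spec : ∀ v, (Q.src (parent v) = v ∧ height (Q.tgt (parent v)) < height v) ∨
    (Q.tgt (parent v) = v ∧ height (Q.src (parent v)) < height v)

def underlyingGraph (Q : Quiv) : SimpleGraph Q.V :=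
  SimpleGraph.fromRel fun x y => ∃ a : Q.A, Q.src a = x ∧ Q.tgt a = y

lemma Connected.underlyingGraph_connected {Q : Quiv} (hc : Connected Q) :
    (underlyingGraph Q).Connected := by
  obtain ⟨_, hreach⟩ := hc
  refine ⟨fun v w => ?_⟩
  induction hreach v w with
  | refl => rfl
  | @tail x y _ hxy ih =>
    by_cases h : x = y
    · rwa [← h]
    obtain ⟨a, hxy⟩ := hxy
    refine ih.trans (SimpleGraph.Adj.reachable ⟨h, ?_⟩)
    rcases hxy with hxy | hxy
    · exact Or.inl ⟨a, hxy⟩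
    · exact Or.inr ⟨a, hxy⟩

/-- Heights are graph distances to the root; the parent arrow is the first step of a
shortest walk to the root. -/
lemma Connected.nonempty_spanningTree {Q : Quiv} (hc : Connected Q) :
    Nonempty (SpanningTree Q) := by
  have hG := hc.underlyingGraph_connected
  obtain ⟨root⟩ := hc.1
  set height := fun v => (underlyingGraph Q).dist v root
  have hstep : ∀ v : {v : Q.V // v ≠ root}, ∃ a : Q.A,
      (Q.src a = v ∧ height (Q.tgt a) < height v) ∨
      (Q.tgt a = v ∧ height (Q.src a) < height v) := by
    rintro ⟨v, hv⟩
    obtain ⟨p, hp⟩ := (hG v root).exists_walk_length_eq_dist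
    cases p with
    | nil => exact absurd rfl hv
    | @cons _ u _ hadj q =>
      have hlt : height u < height v := by
        simp only [height, ← hp, SimpleGraph.Walk.length_cons]
        exact Nat.lt_succ_of_le (SimpleGraph.dist_le q)
      rcases hadj.2 with ⟨a, hs, ht⟩ | ⟨a, hs, ht⟩
      · exact ⟨a, Or.inl ⟨hs, ht ▸ hlt⟩⟩
      · exact ⟨a, Or.inr ⟨ht, hs ▸ hlt⟩⟩
  choose parent hparent using hstep
  exact ⟨⟨root, parent, height, hparent⟩⟩

namespace SpanningTree

variable {Q : Quiv} (T : SpanningTree Q) {G : Type*} [CommGroup G]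

lemma parent_injective : Function.Injective T.parent := by
  intro u v huv
  rcases T.parent_spec u with ⟨hu, hu'⟩ | ⟨hu, hu'⟩ <;>
    rcases T.parent_spec v with ⟨hv, hv'⟩ | ⟨hv, hv'⟩ <;> rw [huv] at hu hu'
  · exact Subtype.ext (hu.symm.trans hv)
  · rw [hv] at hu'; rw [hu] at hv'; omega
  · rw [hv] at hu'; rw [hu] at hv'; omega
  · exact Subtype.ext (hu.symm.trans hv)

lemma card_nonRoot : Fintype.card {v : Q.V // v ≠ T.root} = Fintype.card Q.V - 1 := by
  rw [Fintype.card_subtype_compl, Fintype.card_subtype_eq]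

lemma card_nonTree :
    Fintype.card {a : Q.A // a ∉ Set.range T.parent} = cQ Q := by
  have htree : Fintype.card {a : Q.A // a ∈ Set.range T.parent} = Fintype.card Q.V - 1 := by
    rw [Set.card_range_of_injective T.parent_injective, card_nonRoot]
  have hle : Fintype.card {a : Q.A // a ∈ Set.range T.parent} ≤ Fintype.card Q.A :=
    Fintype.card_subtype_le _
  have hpos : 0 < Fintype.card Q.V := Fintype.card_pos_iff.mpr ⟨T.root⟩
  rw [Fintype.card_subtype_compl, cQ]
  omega

def next (v : {v : Q.V // v ≠ T.root}) : Q.V :=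
  if Q.src (T.parent v) = v then Q.tgt (T.parent v) else Q.src (T.parent v)

lemma height_next_lt (v : {v : Q.V // v ≠ T.root}) : T.height (T.next v) < T.height v := by
  unfold next
  rcases T.parent_spec v with ⟨hs, hlt⟩ | ⟨ht, hlt⟩
  · rwa [if_pos hs]
  · split_ifs with hs
    · rw [← hs] at hlt
      exact absurd hlt (lt_irrefl _)
    · exact hlt

noncomputable def potential (w : Q.A → G) (v : Q.V) : G :=
  if hv : v = T.root then 1
  else
    let a := T.parent ⟨v, hv⟩
    potential w (T.next ⟨v, hv⟩) * if Q.src a = v then w a else (w a)⁻¹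
termination_by T.height v
decreasing_by exact T.height_next_lt ⟨v, hv⟩

lemma coboundary_potential_parent (w : Q.A → G) (v : {v : Q.V // v ≠ T.root}) :
    coboundary Q G (T.potential w) (T.parent v) = w (T.parent v) := by
  have hv : T.potential w v = T.potential w (T.next v) *
      if Q.src (T.parent v) = v then w (T.parent v) else (w (T.parent v))⁻¹ := by
    rw [potential, dif_neg v.2]
  rw [coboundary_apply]
  by_cases hs : Q.src (T.parent v) = v
  · rw [if_pos hs] at hv
    rw [hs, hv, next, if_pos hs, mul_div_cancel_left]
  · have ht := ((T.parent_spec v).resolve_left fun h => hs h.1).1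
    rw [if_neg hs] at hv
    rw [ht, hv, next, if_neg hs, div_mul_cancel_left, inv_inv]

lemma eq_root_of_coboundary_parent {c : Q.V → G}
    (hc : ∀ v, coboundary Q G c (T.parent v) = 1) (v : Q.V) : c v = c T.root := by
  induction hn : T.height v using Nat.strong_induction_on generalizing v with
  | _ n ih =>
    by_cases hv : v = T.root
    · rw [hv]
    have hcv := div_eq_one.mp (hc ⟨v, hv⟩)
    rcases T.parent_spec ⟨v, hv⟩ with ⟨hs, hlt⟩ | ⟨ht, hlt⟩
    · rw [hs] at hcv
      rw [hcv]
      exact ih _ (hn ▸ hlt) _ rfl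
    · rw [ht] at hcv
      rw [← hcv]
      exact ih _ (hn ▸ hlt) _ rfl

lemma coboundary_eq_one_iff {c : Q.V → G} : coboundary Q G c = 1 ↔ ∀ v, c v = c T.root := by
  refine ⟨fun h => T.eq_root_of_coboundary_parent fun v => congrFun h _, fun h => ?_⟩
  ext a
  simp [h]

lemma coboundary_eq_one_of_parent {c : Q.V → G}
    (hc : ∀ v, coboundary Q G c (T.parent v) = 1) : coboundary Q G c = 1 :=
  T.coboundary_eq_one_iff.mpr (T.eq_root_of_coboundary_parent hc)

variable (G) in
def normalizeAtRoot : (Q.V → G) →* ({v : Q.V // v ≠ T.root} → G) where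
  toFun c v := c v / c T.root
  map_one' := by ext; simp
  map_mul' c c' := by ext; exact mul_div_mul_comm _ _ _ _

lemma normalizeAtRoot_surjective : Function.Surjective (T.normalizeAtRoot G) := by
  intro g
  refine ⟨fun v => if hv : v = T.root then 1 else g ⟨v, hv⟩, funext fun v => ?_⟩
  simp [normalizeAtRoot, v.2]

lemma ker_coboundary : (coboundary Q G).ker = (T.normalizeAtRoot G).ker := by
  ext c
  rw [MonoidHom.mem_ker, MonoidHom.mem_ker, T.coboundary_eq_one_iff]
  refine ⟨fun h => funext fun v => div_eq_one.mpr (h v), fun h v => ?_⟩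
  by_cases hv : v = T.root
  · rw [hv]
  · exact div_eq_one.mp (congrFun h ⟨v, hv⟩)

variable (G) in
noncomputable def rangeCoboundaryEquiv :
    (coboundary Q G).range ≃* ({v : Q.V // v ≠ T.root} → G) :=
  (QuotientGroup.quotientKerEquivRange _).symm.trans
    ((QuotientGroup.quotientMulEquivOfEq T.ker_coboundary).trans
      (QuotientGroup.quotientKerEquivOfSurjective _ T.normalizeAtRoot_surjective))

variable (G) in
noncomputable def extendByOne : ({a : Q.A // a ∉ Set.range T.parent} → G) →* (Q.A → G) :=
  Function.ExtendByOne.hom G Subtype.val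

lemma extendByOne_val (g : {a : Q.A // a ∉ Set.range T.parent} → G)
    (a : {a : Q.A // a ∉ Set.range T.parent}) : T.extendByOne G g a = g a :=
  Subtype.val_injective.extend_apply _ _ a

lemma extendByOne_parent (g : {a : Q.A // a ∉ Set.range T.parent} → G)
    (v : {v : Q.V // v ≠ T.root}) : T.extendByOne G g (T.parent v) = 1 :=
  Function.extend_apply' _ _ _ fun ⟨a, ha⟩ => a.2 (ha ▸ ⟨v, rfl⟩)

/-- A coboundary that is trivial on the tree arrows is trivial. -/
lemma injective_mk_extendByOne : Function.Injective
    ((QuotientGroup.mk' (coboundary Q G).range).comp (T.extendByOne G)) := by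
  rw [injective_iff_map_eq_one]
  intro g hg
  obtain ⟨c, hc⟩ := (QuotientGroup.eq_one_iff _).mp hg
  have hc1 : coboundary Q G c = 1 :=
    T.coboundary_eq_one_of_parent fun v => by rw [hc, T.extendByOne_parent]
  ext a
  have := congrFun (hc.symm.trans hc1) a
  rwa [T.extendByOne_val] at this

/-- Every `w` is congruent, modulo coboundaries, to `w / d (potential w)`, which is trivial on
the tree. -/
lemma surjective_mk_extendByOne : Function.Surjective
    ((QuotientGroup.mk' (coboundary Q G).range).comp (T.extendByOne G)) := by
  intro q
  obtain ⟨w, rfl⟩ := QuotientGroup.mk_surjective q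
  set w' := w / coboundary Q G (T.potential w)
  have hw' : T.extendByOne G (fun a => w' a.1) = w' := by
    ext a
    by_cases ha : a ∈ Set.range T.parent
    · obtain ⟨v, rfl⟩ := ha
      rw [T.extendByOne_parent]
      simp [w', T.coboundary_potential_parent]
    · exact T.extendByOne_val _ ⟨a, ha⟩
  refine ⟨fun a => w' a.1, ?_⟩
  rw [MonoidHom.comp_apply, hw', QuotientGroup.mk'_apply, QuotientGroup.eq]
  exact ⟨T.potential w, by simp [w']⟩

variable (G) in
noncomputable def quotientRangeCoboundaryEquiv :
    (Q.A → G) ⧸ (coboundary Q G).range ≃* ({a : Q.A // a ∉ Set.range T.parent} → G) :=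
  (MulEquiv.ofBijective _ ⟨T.injective_mk_extendByOne, T.surjective_mk_extendByOne⟩).symm

end SpanningTree

section Paths

variable {Q : Quiv} {M : Type*} [CommMonoid M]

def pathWeight (w : Q.A → M) : Pth Q → M
  | Sum.inl _ => 1
  | Sum.inr l => (l.map w).prod

lemma pathWeight_one (p : Pth Q) : pathWeight (1 : Q.A → M) p = 1 := by
  cases p <;> simp [pathWeight, Pi.one_def]

lemma pathWeight_mul (w w' : Q.A → M) (p : Pth Q) :
    pathWeight (w * w') p = pathWeight w p * pathWeight w' p := by
  cases p with
  | inl => simp [pathWeight]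
  | inr l => exact List.prod_map_mul

lemma pathWeight_pcomp (w : Q.A → M) {p q r : Pth Q} (h : pcomp Q p q = some r) :
    pathWeight w r = pathWeight w p * pathWeight w q := by
  cases p <;> cases q <;> simp only [pcomp] at h <;> (try split_ifs at h) <;>
    cases h <;> simp [pathWeight, mul_comm]

lemma pcomp_inl_right (p : Pth Q) (v : Q.V) :
    pcomp Q p (Sum.inl v) = if thStart Q p = some v then some p else none := by
  cases p <;> simp [pcomp, thStart]

lemma pcomp_inl_left (p : Pth Q) (v : Q.V) :
    pcomp Q (Sum.inl v) p = if thEnd Q p = some v then some p else none := by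
  cases p
  · simp only [pcomp, thEnd, Option.some_inj]; split_ifs <;> simp_all
  · simp [pcomp]

def Gam.src {P : Rels Q} : Gam Q P → Q.V
  | ⟨Sum.inl v, _⟩ => v
  | ⟨Sum.inr l, h⟩ => Q.src (l.head h.1)

def Gam.tgt {P : Rels Q} : Gam Q P → Q.V
  | ⟨Sum.inl v, _⟩ => v
  | ⟨Sum.inr l, h⟩ => Q.tgt (l.getLast h.1)

lemma thStart_val {P : Rels Q} (D : Gam Q P) : thStart Q D.1 = some D.src := by
  obtain ⟨_ | l, h⟩ := D
  · rfl
  · simp [thStart, Gam.src, List.head?_eq_some_head h.1]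

lemma thEnd_val {P : Rels Q} (D : Gam Q P) : thEnd Q D.1 = some D.tgt := by
  obtain ⟨_ | l, h⟩ := D
  · rfl
  · simp [thEnd, Gam.tgt, List.getLast?_eq_some_getLast h.1]

lemma prod_map_coboundary {G : Type*} [CommGroup G] (c : Q.V → G) :
    ∀ (l : List Q.A) (hne : l ≠ []), l.IsChain (fun a b => Q.tgt a = Q.src b) →
      (l.map (coboundary Q G c)).prod = c (Q.src (l.head hne)) / c (Q.tgt (l.getLast hne))
  | [a], _, _ => by simp
  | a :: b :: l, _, hl => by
    rw [List.isChain_cons_cons] at hl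
    rw [List.map_cons, List.prod_cons, prod_map_coboundary c (b :: l) (List.cons_ne_nil _ _) hl.2,
      List.head_cons, List.head_cons, List.getLast_cons (List.cons_ne_nil _ _), coboundary_apply,
      hl.1, div_mul_div_cancel]

lemma pathWeight_coboundary {P : Rels Q} {G : Type*} [CommGroup G] (c : Q.V → G) (D : Gam Q P) :
    pathWeight (coboundary Q G c) D.1 = c D.src / c D.tgt := by
  obtain ⟨_ | l, h⟩ := D
  · simp [pathWeight, Gam.src, Gam.tgt]
  · exact prod_map_coboundary c l h.1 (h.2.imp fun _ _ hab => hab.1)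

lemma pathWeight_trivGam {P : Rels Q} (w : Q.A → M) (v : Q.V) :
    pathWeight w (trivGam Q P v).1 = 1 := rfl

lemma pathWeight_arrGam {P : Rels Q} (w : Q.A → M) (a : Q.A) :
    pathWeight w (arrGam Q P a).1 = w a := by
  simp [pathWeight, arrGam]

end Paths

namespace PathAlgPresentation

variable {k : Type} [Field k] {Q : Quiv} {P : Rels Q} {A : Type} [Ring A] [Algebra k A]
  (pp : PathAlgPresentation k Q P A)

lemma basImg_val (D : Gam Q P) : basImg pp.bas D.1 = pp.bas D := dif_pos D.2

lemma bas_mul_e (D : Gam Q P) (v : Q.V) :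
    pp.bas D * pp.e v = if D.src = v then pp.bas D else 0 := by
  rw [e, pp.mul_bas, trivGam, pcomp_inl_right, thStart_val]
  split_ifs <;> simp_all [basImg_val]

lemma e_mul_bas (D : Gam Q P) (v : Q.V) :
    pp.e v * pp.bas D = if D.tgt = v then pp.bas D else 0 := by
  rw [e, pp.mul_bas, trivGam, pcomp_inl_left, thEnd_val]
  split_ifs <;> simp_all [basImg_val]

lemma e_mul_e (v w : Q.V) : pp.e v * pp.e w = if v = w then pp.e v else 0 :=
  pp.bas_mul_e (trivGam Q P v) w

noncomputable def scaleLinear (w : Q.A → kˣ) : A →ₗ[k] A :=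
  pp.bas.constr k fun D => ((pathWeight w D.1 : kˣ) : k) • pp.bas D

lemma scaleLinear_bas (w : Q.A → kˣ) (D : Gam Q P) :
    pp.scaleLinear w (pp.bas D) = ((pathWeight w D.1 : kˣ) : k) • pp.bas D :=
  pp.bas.constr_basis k _ D

lemma scaleLinear_one (w : Q.A → kˣ) : pp.scaleLinear w 1 = 1 := by
  simp only [pp.one_bas, map_sum, scaleLinear_bas, pathWeight_trivGam, Units.val_one, one_smul]

lemma scaleLinear_mul (w : Q.A → kˣ) (x y : A) :
    pp.scaleLinear w (x * y) = pp.scaleLinear w x * pp.scaleLinear w y := by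
  have key : (LinearMap.mul k A).compr₂ (pp.scaleLinear w) =
      (LinearMap.mul k A).compl₁₂ (pp.scaleLinear w) (pp.scaleLinear w) := by
    refine LinearMap.ext_basis pp.bas pp.bas fun C D => ?_
    simp only [LinearMap.compr₂_apply, LinearMap.compl₁₂_apply, LinearMap.mul_apply',
      scaleLinear_bas, smul_mul_smul_comm, pp.mul_bas]
    rcases hE : pcomp Q C.1 D.1 with _ | E
    · simp
    · simp only [Option.elim, basImg]
      split_ifs with hok
      · rw [pp.scaleLinear_bas w (⟨E, hok⟩ : Gam Q P), pathWeight_pcomp w hE, Units.val_mul]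
      · simp
  exact LinearMap.congr_fun₂ key x y

noncomputable def scaleAlgHom (w : Q.A → kˣ) : A →ₐ[k] A :=
  AlgHom.ofLinearMap (pp.scaleLinear w) (pp.scaleLinear_one w) (pp.scaleLinear_mul w)

noncomputable def scaleEnd : (Q.A → kˣ) →* (A →ₐ[k] A) where
  toFun := pp.scaleAlgHom
  map_one' := AlgHom.toLinearMap_injective <| pp.bas.ext fun D => by
    simp [scaleAlgHom, scaleLinear_bas, pathWeight_one]
  map_mul' w w' := AlgHom.toLinearMap_injective <| pp.bas.ext fun D => by
    simp [scaleAlgHom, scaleLinear_bas, pathWeight_mul, smul_smul, mul_comm]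

noncomputable def scaleAut : (Q.A → kˣ) →* (A ≃ₐ[k] A) :=
  (AlgEquiv.algHomUnitsEquiv k A).toMonoidHom.comp pp.scaleEnd.toHomUnits

lemma scaleAut_bas (w : Q.A → kˣ) (D : Gam Q P) :
    pp.scaleAut w (pp.bas D) = ((pathWeight w D.1 : kˣ) : k) • pp.bas D :=
  pp.scaleLinear_bas w D

lemma scaleAut_e (w : Q.A → kˣ) (v : Q.V) : pp.scaleAut w (pp.e v) = pp.e v := by
  rw [e, scaleAut_bas, pathWeight_trivGam, Units.val_one, one_smul]

lemma scaleAut_arr (w : Q.A → kˣ) (a : Q.A) :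
    pp.scaleAut w (pp.bas (arrGam Q P a)) = (w a : k) • pp.bas (arrGam Q P a) := by
  rw [scaleAut_bas, pathWeight_arrGam]

lemma scaleAut_injective : Function.Injective pp.scaleAut := by
  intro w w' h
  funext a
  have := congrArg (fun f => pp.coeff f (arrGam Q P a) (arrGam Q P a)) h
  exact Units.ext (by simpa [coeff, scaleAut_arr] using this)

noncomputable def diag : (Q.V → k) →* A where
  toFun c := ∑ v, c v • pp.e v
  map_one' := by simp [pp.one_bas, e]
  map_mul' c c' := by
    simp only [Finset.sum_mul, Finset.mul_sum, smul_mul_smul_comm, e_mul_e, Pi.mul_apply]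
    simp

lemma bas_mul_diag (D : Gam Q P) (c : Q.V → k) : pp.bas D * pp.diag c = c D.src • pp.bas D := by
  simp [diag, Finset.mul_sum, bas_mul_e]

lemma diag_mul_bas (D : Gam Q P) (c : Q.V → k) : pp.diag c * pp.bas D = c D.tgt • pp.bas D := by
  simp [diag, Finset.sum_mul, e_mul_bas]

noncomputable def diagUnits : (Q.V → kˣ) →* Aˣ :=
  (Units.map pp.diag).comp MulEquiv.piUnits.symm.toMonoidHom

lemma val_diagUnits (c : Q.V → kˣ) : (pp.diagUnits c : A) = pp.diag fun v => (c v : k) := rfl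

lemma scaleAut_coboundary (c : Q.V → kˣ) (x : A) :
    pp.scaleAut (coboundary Q kˣ c) x = ↑(pp.diagUnits c)⁻¹ * x * pp.diagUnits c := by
  have key : (pp.scaleAut (coboundary Q kˣ c)).toLinearMap =
      LinearMap.mulLeft k (↑(pp.diagUnits c)⁻¹ : A) ∘ₗ
        LinearMap.mulRight k (pp.diagUnits c : A) := by
    refine pp.bas.ext fun D => ?_
    rw [← map_inv, LinearMap.comp_apply, LinearMap.mulRight_apply, LinearMap.mulLeft_apply,
      val_diagUnits, val_diagUnits, bas_mul_diag, mul_smul_comm, diag_mul_bas, smul_smul,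
      AlgEquiv.toLinearMap_apply, scaleAut_bas, pathWeight_coboundary]
    simp [div_eq_mul_inv]
  simpa [mul_assoc] using LinearMap.congr_fun key x

lemma bas_cons {a : Q.A} {l : List Q.A} (h : pthOk Q P (Sum.inr (a :: l))) (hl : l ≠ []) :
    pp.bas ⟨Sum.inr (a :: l), h⟩ =
      pp.bas ⟨Sum.inr l, hl, h.2.tail⟩ * pp.bas (arrGam Q P a) :=
  ((pp.mul_bas ⟨Sum.inr l, hl, h.2.tail⟩ (arrGam Q P a)).trans (pp.basImg_val ⟨_, h⟩)).symm

lemma algHom_ext {B : Type*} [Semiring B] [Algebra k B] {f g : A →ₐ[k] B}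
    (he : ∀ v, f (pp.e v) = g (pp.e v))
    (ha : ∀ a, f (pp.bas (arrGam Q P a)) = g (pp.bas (arrGam Q P a))) : f = g := by
  have hpath : ∀ (l : List Q.A) (h : pthOk Q P (Sum.inr l)),
      f (pp.bas ⟨Sum.inr l, h⟩) = g (pp.bas ⟨Sum.inr l, h⟩) := by
    intro l
    induction l with
    | nil => exact fun h => absurd rfl h.1
    | cons a l ih =>
      intro h
      by_cases hl : l = []
      · subst hl
        exact ha a
      · rw [pp.bas_cons h hl, map_mul, map_mul, ha]
        exact congrArg (· * _) (ih _)
  refine AlgHom.toLinearMap_injective (pp.bas.ext fun D => ?_)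
  obtain ⟨_ | l, h⟩ := D
  · exact he _
  · exact hpath l h

lemma memSQ1_iff (f : A ≃ₐ[k] A) : pp.MemSQ1 f ↔ f ∈ pp.scaleAut.range := by
  constructor
  · rintro ⟨⟨he, -⟩, hscale⟩
    choose w hw using hscale
    refine ⟨w, AlgEquiv.coe_toAlgHom_injective (pp.algHom_ext (fun v => ?_) fun a => ?_)⟩
    · simpa [scaleAut_e] using (he v).symm
    · simpa [scaleAut_arr] using (hw a).symm
  · rintro ⟨w, rfl⟩
    refine ⟨⟨pp.scaleAut_e w, fun a => ?_⟩, fun a => ⟨w a, pp.scaleAut_arr w a⟩⟩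
    simp [coeff, scaleAut_arr]

lemma memInnS_iff (f : A ≃ₐ[k] A) :
    pp.MemInnS f ↔ f ∈ (coboundary Q kˣ).range.map pp.scaleAut := by
  constructor
  · rintro ⟨c, x, hx, hf⟩
    obtain rfl : x = pp.diagUnits c := Units.ext hx
    refine ⟨_, ⟨c, rfl⟩, AlgEquiv.ext fun y => ?_⟩
    rw [pp.scaleAut_coboundary, hf]
  · rintro ⟨_, ⟨c, rfl⟩, rfl⟩
    exact ⟨c, pp.diagUnits c, rfl, pp.scaleAut_coboundary c⟩

end PathAlgPresentation

section Transfer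

variable {G M : Type*} [Group G] [Group M] (θ : G →* M) (N : Subgroup G)

lemma map_subgroupOf_range : (N.map θ).subgroupOf θ.range = N.map θ.rangeRestrict := by
  ext ⟨x, hx⟩
  simp only [Subgroup.mem_subgroupOf, Subgroup.mem_map, Subtype.ext_iff,
    MonoidHom.coe_rangeRestrict]

lemma normal_map_subgroupOf_range [N.Normal] : ((N.map θ).subgroupOf θ.range).Normal := by
  rw [map_subgroupOf_range]
  exact Subgroup.Normal.map ‹_› _ θ.rangeRestrict_surjective

variable {θ} in
noncomputable def quotientMapSubgroupOfRangeEquiv (hθ : Function.Injective θ)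
    [N.Normal] [((N.map θ).subgroupOf θ.range).Normal] :
    θ.range ⧸ (N.map θ).subgroupOf θ.range ≃* G ⧸ N :=
  (QuotientGroup.congr N _ (MonoidHom.ofInjective hθ) (map_subgroupOf_range θ N).symm).symm

end Transfer

open PathAlgPresentation

theorem innS_iso_and_quotient_general
    (k : Type) [Field k] (Q : Quiv) (P : Rels Q)
    (A : Type) [Ring A] [Algebra k A]
    (pp : PathAlgPresentation k Q P A)
    (hc : Connected Q) :
    ∃ (S Is : Subgroup (A ≃ₐ[k] A)),
      ((S : Set (A ≃ₐ[k] A)) = {f | pp.MemSQ1 f}) ∧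
      ((Is : Set (A ≃ₐ[k] A)) = {f | pp.MemInnS f}) ∧
      Is ≤ S ∧
      Nonempty (↥Is ≃* (Fin (Fintype.card Q.V - 1) → kˣ)) ∧
      ∃ hn : (Is.subgroupOf S).Normal,
        letI := hn
        Nonempty ((↥S ⧸ Is.subgroupOf S) ≃* (Fin (cQ Q) → kˣ)) := by
  obtain ⟨T⟩ := hc.nonempty_spanningTree
  have hθ := pp.scaleAut_injective
  refine ⟨pp.scaleAut.range, (coboundary Q kˣ).range.map pp.scaleAut,
    Set.ext fun f => (pp.memSQ1_iff f).symm, Set.ext fun f => (pp.memInnS_iff f).symm,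
    Subgroup.map_le_range _ _, ⟨?_⟩, normal_map_subgroupOf_range _ _, ⟨?_⟩⟩
  · exact (Subgroup.equivMapOfInjective _ _ hθ).symm.trans <|
      (T.rangeCoboundaryEquiv kˣ).trans <|
        MulEquiv.arrowCongr (Fintype.equivFinOfCardEq T.card_nonRoot) (MulEquiv.refl kˣ)
  · exact (quotientMapSubgroupOfRangeEquiv _ hθ).trans <|
      (T.quotientRangeCoboundaryEquiv kˣ).trans <|
        MulEquiv.arrowCongr (Fintype.equivFinOfCardEq T.card_nonTree) (MulEquiv.refl kˣ)

/-- `Inn_S^l(A) ≅ (k*)^{#Q₀-1}`, it is a subgroup of `S(Q₁)`, and the quotient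
`S(Q₁)/Inn_S^l(A)` is isomorphic to `(k*)^{c(Q)}`. -/
theorem innS_iso_and_quotient
    (k : Type) [Field k] (Q : Quiv) (P : Rels Q)
    (A : Type) [Ring A] [Algebra k A]
    (pp : PathAlgPresentation k Q P A) (hg : IsGentle Q P)
    (hc : Connected Q) :
    ∃ (S Is : Subgroup (A ≃ₐ[k] A)),
      ((S : Set (A ≃ₐ[k] A)) = {f | pp.MemSQ1 f}) ∧
      ((Is : Set (A ≃ₐ[k] A)) = {f | pp.MemInnS f}) ∧
      Is ≤ S ∧
      Nonempty (↥Is ≃* (Fin (Fintype.card Q.V - 1) → kˣ)) ∧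
      ∃ hn : (Is.subgroupOf S).Normal,
        letI := hn
        Nonempty ((↥S ⧸ Is.subgroupOf S) ≃* (Fin (cQ Q) → kˣ)) :=
  innS_iso_and_quotient_general k Q P A pp hc

end GentlePaper
end
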